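/- arXiv:1308.6814 — 2 statements merged into one kernel-verified Lean document; each statement's English description precedes it below -/
import Mathlib

section
/- Let m ≥ 0, let Γ ⊆ V_m, let p ∈ Γ, and set Γ' = Γ \ {p}. If x, y ∈ Γ' are distinct points with c^{Γ}_{x,p} > 0 and c^{Γ}_{y,p} > 0, then c^{Γ'}_{x,y} > 0. -/
open scoped BigOperators

noncomputable section

namespace SGPaper

/-- The three corners of the Sierpinski gasket:
`q₀ = (1/2, √3/2)`, `q₁ = (0,0)`, `q₂ = (1,0)`. -/
def q : Fin 3 → ℝ × ℝ
  | 0 => (1 / 2, Real.sqrt 3 / 2)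
  | 1 => (0, 0)
  | 2 => (1, 0)

/-- The contraction map towards corner `i`: `F_i(x) = (x + q_i)/2`. -/
def Fmap (i : Fin 3) (x : ℝ × ℝ) : ℝ × ℝ := (2⁻¹ : ℝ) • (x + q i)

/-- `Fword w = F_{w₁} ∘ ⋯ ∘ F_{w_m}` for the word `w = w₁⋯w_m`. -/
def Fword (w : List (Fin 3)) : ℝ × ℝ → ℝ × ℝ :=
  w.foldr (fun i f => Fmap i ∘ f) id

/-- The level-`m` vertex set of the Sierpinski gasket:
`V_m = ⋃_{|w| = m} F_w({q₀, q₁, q₂})`. -/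
def V (m : ℕ) : Set (ℝ × ℝ) :=
  {x | ∃ w : List (Fin 3), w.length = m ∧ ∃ i : Fin 3, x = Fword w (q i)}

/-- `x` and `y` are `m`-neighbors: they are distinct and belong to a common
level-`m` cell `F_w({q₀, q₁, q₂})`. -/
def Nbr (m : ℕ) (x y : ℝ × ℝ) : Prop :=
  x ≠ y ∧ ∃ w : List (Fin 3), w.length = m ∧
    (∃ i : Fin 3, x = Fword w (q i)) ∧ (∃ j : Fin 3, y = Fword w (q j))

/-- The value `(u x - u y)²` on the unordered pair `{x, y}`. -/
def edgeVal (u : ℝ × ℝ → ℝ) : Sym2 (ℝ × ℝ) → ℝ :=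
  Sym2.lift ⟨fun x y => (u x - u y) ^ 2, fun _ _ => by ring⟩

/-- The unordered pair `e` is an edge of the level-`m` graph `Γ_m`. -/
def IsEdge (m : ℕ) (e : Sym2 (ℝ × ℝ)) : Prop :=
  ∃ x y : ℝ × ℝ, Nbr m x y ∧ e = s(x, y)

/-- The level-`m` graph energy: `E_m(u) = (5/3)^m Σ (u x − u y)²`, the sum being over
unordered `m`-neighbor pairs `{x, y}` (a finite set, so `tsum` is the honest sum). -/
def Energy (m : ℕ) (u : ℝ × ℝ → ℝ) : ℝ :=
  (5 / 3 : ℝ) ^ m * ∑' e : {e : Sym2 (ℝ × ℝ) // IsEdge m e}, edgeVal u e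

/-- `Q_E(v)`: minimal level-`m` energy among functions `u : V_m → ℝ` agreeing
with `v` on `E` (the minimum is attained, so it equals this infimum). -/
def Q (m : ℕ) (E : Set (ℝ × ℝ)) (v : ℝ × ℝ → ℝ) : ℝ :=
  sInf {r | ∃ u : ℝ × ℝ → ℝ, (∀ x ∈ E, u x = v x) ∧ r = Energy m u}

/-- Indicator function of the point `z`. -/
def ind (z : ℝ × ℝ) : ℝ × ℝ → ℝ := fun t => if t = z then 1 else 0

/-- The conductance `c^E_{x,y} = (Q_E(𝟙_x) + Q_E(𝟙_y) − Q_E(𝟙_x + 𝟙_y))/2`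
between `x, y ∈ E`, computed at level `m`. -/
def cond (m : ℕ) (E : Set (ℝ × ℝ)) (x y : ℝ × ℝ) : ℝ :=
  (Q m E (ind x) + Q m E (ind y) - Q m E (ind x + ind y)) / 2

/-!
Write `bilin m` for the symmetric bilinear form polarizing `Energy m`. Every bounded datum `v`
on `E` has a harmonic extension `u` (`u = v` on `E`, `bilin m u w = 0` whenever `w` vanishes
on `E`): minimize the energy over the compact set of admissible functions with values in an
interval containing the range of `v`, which loses nothing because clipping to that interval
does not increase the energy. Then `Q_E(v) = Energy u`, so for indicator data
`c^E_{x,y} = -bilin m u_x u_y`, and the Markov property `Energy |f| ≤ Energy f` at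
`f = u_x - u_y` gives `c^E_{x,y} ≥ 0`. Eliminating `p` is a Schur complement,
`c^{E∖{p}}_{x,y} = c^E_{x,y} + c^E_{x,p} c^E_{y,p} / Q_E(𝟙_p)`,
and `Q_E(𝟙_p) > 0` as soon as `c^E_{x,p} ≠ 0`, by Cauchy–Schwarz.
-/

theorem finite_V (m : ℕ) : (V m).Finite := by
  have h : V m ⊆ Set.image2 (fun (w : List (Fin 3)) (i : Fin 3) => Fword w (q i))
      {w | w.length = m} Set.univ := by
    rintro x ⟨w, hw, i, rfl⟩
    exact ⟨w, hw, i, trivial, rfl⟩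
  exact ((List.finite_length_eq (Fin 3) m).image2 _ Set.finite_univ).subset h

theorem finite_setOf_isEdge (m : ℕ) : {e | IsEdge m e}.Finite := by
  have h : {e | IsEdge m e} ⊆ Set.image2 (fun x y => s(x, y)) (V m) (V m) := by
    rintro e ⟨x, y, ⟨-, w, hw, ⟨i, hi⟩, ⟨j, hj⟩⟩, rfl⟩
    exact ⟨x, ⟨w, hw, i, hi⟩, y, ⟨w, hw, j, hj⟩, rfl⟩
  exact ((finite_V m).image2 _ (finite_V m)).subset h

instance (m : ℕ) : Fintype {e : Sym2 (ℝ × ℝ) // IsEdge m e} :=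
  (finite_setOf_isEdge m).fintype

def edgeBilin (u w : ℝ × ℝ → ℝ) : Sym2 (ℝ × ℝ) → ℝ :=
  Sym2.lift ⟨fun x y => (u x - u y) * (w x - w y), fun _ _ => by ring⟩

def bilin (m : ℕ) (u w : ℝ × ℝ → ℝ) : ℝ :=
  (5 / 3 : ℝ) ^ m * ∑ e : {e : Sym2 (ℝ × ℝ) // IsEdge m e}, edgeBilin u w e

section Energy

variable (m : ℕ)

theorem energy_eq_sum (u : ℝ × ℝ → ℝ) :
    Energy m u = (5 / 3 : ℝ) ^ m * ∑ e : {e : Sym2 (ℝ × ℝ) // IsEdge m e}, edgeVal u e := by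
  rw [Energy, tsum_fintype]

theorem energy_nonneg (u : ℝ × ℝ → ℝ) : 0 ≤ Energy m u := by
  rw [energy_eq_sum]
  refine mul_nonneg (by positivity) (Finset.sum_nonneg fun e _ => ?_)
  induction (e : Sym2 (ℝ × ℝ)) using Sym2.ind with
  | _ a b => exact sq_nonneg _

theorem energy_add_smul (u w : ℝ × ℝ → ℝ) (t : ℝ) :
    Energy m (u + t • w) = Energy m u + 2 * t * bilin m u w + t ^ 2 * Energy m w := by
  have hedge (e : Sym2 (ℝ × ℝ)) :
      edgeVal (u + t • w) e = edgeVal u e + 2 * t * edgeBilin u w e + t ^ 2 * edgeVal w e := by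
    induction e using Sym2.ind with
    | _ a b =>
      simp only [edgeVal, edgeBilin, Sym2.lift_mk, Pi.add_apply, Pi.smul_apply, smul_eq_mul]
      ring
  simp only [energy_eq_sum, bilin, hedge, Finset.sum_add_distrib, ← Finset.mul_sum]
  ring

theorem energy_add (u w : ℝ × ℝ → ℝ) :
    Energy m (u + w) = Energy m u + 2 * bilin m u w + Energy m w := by
  simpa using energy_add_smul m u w 1

theorem bilin_add_smul_left (u u' w : ℝ × ℝ → ℝ) (t : ℝ) :
    bilin m (u + t • u') w = bilin m u w + t * bilin m u' w := by
  have hedge (e : Sym2 (ℝ × ℝ)) :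
      edgeBilin (u + t • u') w e = edgeBilin u w e + t * edgeBilin u' w e := by
    induction e using Sym2.ind with
    | _ a b =>
      simp only [edgeBilin, Sym2.lift_mk, Pi.add_apply, Pi.smul_apply, smul_eq_mul]
      ring
  simp only [bilin, hedge, Finset.sum_add_distrib, ← Finset.mul_sum]
  ring

theorem bilin_add_left (u u' w : ℝ × ℝ → ℝ) :
    bilin m (u + u') w = bilin m u w + bilin m u' w := by
  simpa using bilin_add_smul_left m u u' w 1

theorem bilin_sq_le (u w : ℝ × ℝ → ℝ) : bilin m u w ^ 2 ≤ Energy m u * Energy m w := by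
  have h := discrim_le_zero (a := Energy m w) (b := 2 * bilin m u w) (c := Energy m u) fun t =>
    (energy_nonneg m (u + t • w)).trans_eq (by rw [energy_add_smul]; ring)
  rw [discrim] at h
  linarith

theorem continuous_energy : Continuous (Energy m) := by
  simp only [funext (energy_eq_sum m)]
  refine continuous_const.mul (continuous_finsetSum _ fun e _ => ?_)
  induction (e : Sym2 (ℝ × ℝ)) using Sym2.ind with
  | _ a b => exact ((continuous_apply a).sub (continuous_apply b)).pow 2

theorem energy_comp_le {φ : ℝ → ℝ} (hφ : LipschitzWith 1 φ) (u : ℝ × ℝ → ℝ) :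
    Energy m (φ ∘ u) ≤ Energy m u := by
  simp only [energy_eq_sum]
  refine mul_le_mul_of_nonneg_left (Finset.sum_le_sum fun e _ => ?_) (by positivity)
  induction (e : Sym2 (ℝ × ℝ)) using Sym2.ind with
  | _ a b =>
    have h := hφ.dist_le_mul (u a) (u b)
    simp only [Real.dist_eq, NNReal.coe_one, one_mul] at h
    exact sq_le_sq.mpr (by simpa using h)

end Energy

section Minimizers

variable {m : ℕ} {E : Set (ℝ × ℝ)} {v : ℝ × ℝ → ℝ}

theorem Q_le_energy {u : ℝ × ℝ → ℝ} (hu : ∀ z ∈ E, u z = v z) : Q m E v ≤ Energy m u :=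
  csInf_le ⟨0, by rintro r ⟨u, -, rfl⟩; exact energy_nonneg m u⟩ ⟨u, hu, rfl⟩

theorem le_Q {c : ℝ} (h : ∀ u : ℝ × ℝ → ℝ, (∀ z ∈ E, u z = v z) → c ≤ Energy m u) :
    c ≤ Q m E v :=
  le_csInf ⟨_, v, fun _ _ => rfl, rfl⟩ (by rintro r ⟨u, hu, rfl⟩; exact h u hu)

theorem exists_energy_eq_Q {a b : ℝ} (hv : ∀ z, v z ∈ Set.Icc a b) :
    ∃ u, (∀ z ∈ E, u z = v z) ∧ Energy m u = Q m E v := by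
  set K := {u : ℝ × ℝ → ℝ | ∀ z ∈ E, u z = v z} ∩ Set.univ.pi fun _ => Set.Icc a b
  have hK : IsCompact K := by
    refine (isCompact_univ_pi fun _ => isCompact_Icc).inter_left ?_
    simp only [Set.ofPred_forall]
    exact isClosed_biInter fun z _ => isClosed_eq (continuous_apply z) continuous_const
  obtain ⟨u, huK, hmin⟩ :=
    hK.exists_isMinOn ⟨v, fun _ _ => rfl, fun z _ => hv z⟩ (continuous_energy m).continuousOn
  refine ⟨u, huK.1, le_antisymm (le_Q fun u' hu' => ?_) (Q_le_energy huK.1)⟩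
  set clip : ℝ → ℝ := fun t => max a (min b t)
  have hab : a ≤ b := (hv 0).1.trans (hv 0).2
  have hclip : clip ∘ u' ∈ K := by
    refine ⟨fun z hz => ?_, fun z _ => ⟨le_max_left _ _, max_le hab (min_le_left _ _)⟩⟩
    simp only [Function.comp_apply, clip, hu' z hz, min_eq_right (hv z).2, max_eq_right (hv z).1]
  exact (hmin hclip).trans (energy_comp_le m (LipschitzWith.id.const_min b |>.const_max a) u')

variable (m E)

def IsHarmonicExt (v u : ℝ × ℝ → ℝ) : Prop :=
  (∀ z ∈ E, u z = v z) ∧ ∀ w : ℝ × ℝ → ℝ, (∀ z ∈ E, w z = 0) → bilin m u w = 0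

variable {m E}

theorem isHarmonicExt_of_energy_eq_Q {u : ℝ × ℝ → ℝ} (hu : ∀ z ∈ E, u z = v z)
    (hmin : Energy m u = Q m E v) : IsHarmonicExt m E v u := by
  refine ⟨hu, fun w hw => ?_⟩
  have hadm (t : ℝ) : ∀ z ∈ E, (u + t • w) z = v z := fun z hz => by
    simp [hu z hz, hw z hz]
  have h := discrim_le_zero (a := Energy m w) (b := 2 * bilin m u w) (c := 0) fun t => by
    have := (hmin.trans_le (Q_le_energy (hadm t))).trans_eq (energy_add_smul m u w t)
    linarith
  rw [discrim] at h
  nlinarith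

theorem IsHarmonicExt.Q_eq {u : ℝ × ℝ → ℝ} (hu : IsHarmonicExt m E v u) :
    Q m E v = Energy m u := by
  refine le_antisymm (Q_le_energy hu.1) (le_Q fun u' hu' => ?_)
  have hw : ∀ z ∈ E, (u' - u) z = 0 := fun z hz => by simp [hu' z hz, hu.1 z hz]
  have h := energy_add m u (u' - u)
  rw [add_sub_cancel, hu.2 _ hw] at h
  linarith [energy_nonneg m (u' - u)]

theorem IsHarmonicExt.add_smul {v' u u' : ℝ × ℝ → ℝ} (hu : IsHarmonicExt m E v u)
    (hu' : IsHarmonicExt m E v' u') (t : ℝ) :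
    IsHarmonicExt m E (v + t • v') (u + t • u') := by
  refine ⟨fun z hz => by simp [hu.1 z hz, hu'.1 z hz], fun w hw => ?_⟩
  rw [bilin_add_smul_left, hu.2 w hw, hu'.2 w hw, mul_zero, add_zero]

theorem IsHarmonicExt.add {v' u u' : ℝ × ℝ → ℝ} (hu : IsHarmonicExt m E v u)
    (hu' : IsHarmonicExt m E v' u') : IsHarmonicExt m E (v + v') (u + u') := by
  simpa using hu.add_smul hu' 1

end Minimizers

theorem exists_isHarmonicExt_ind (m : ℕ) (E : Set (ℝ × ℝ)) (x : ℝ × ℝ) :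
    ∃ u, IsHarmonicExt m E (ind x) u := by
  obtain ⟨u, hu, hmin⟩ := exists_energy_eq_Q (m := m) (E := E) (v := ind x) (a := 0) (b := 1)
    fun z => by unfold ind; split_ifs <;> norm_num
  exact ⟨u, isHarmonicExt_of_energy_eq_Q hu hmin⟩

section Conductance

variable {m : ℕ} {E : Set (ℝ × ℝ)} {x y p : ℝ × ℝ}

theorem IsHarmonicExt.cond_eq {ux uy : ℝ × ℝ → ℝ} (hx : IsHarmonicExt m E (ind x) ux)
    (hy : IsHarmonicExt m E (ind y) uy) : cond m E x y = -bilin m ux uy := by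
  rw [cond, hx.Q_eq, hy.Q_eq, (hx.add hy).Q_eq, energy_add]
  ring

theorem cond_nonneg (hxy : x ≠ y) : 0 ≤ cond m E x y := by
  obtain ⟨ux, hx⟩ := exists_isHarmonicExt_ind m E x
  obtain ⟨uy, hy⟩ := exists_isHarmonicExt_ind m E y
  have hadm : ∀ z ∈ E, |ux z - uy z| = (ind x + ind y) z := fun z hz => by
    rw [hx.1 z hz, hy.1 z hz]
    simp only [ind, Pi.add_apply]
    split_ifs with h₁ h₂ <;> first | exact absurd (h₁.symm.trans h₂) hxy | norm_num
  have h := (Q_le_energy hadm).trans (energy_comp_le m lipschitzWith_one_norm (ux - uy))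
  rw [(hx.add hy).Q_eq, energy_add, sub_eq_add_neg, ← neg_one_smul ℝ uy, energy_add_smul] at h
  rw [hx.cond_eq hy]
  linarith

theorem Q_ind_pos_of_cond_ne_zero (h : cond m E x p ≠ 0) : 0 < Q m E (ind p) := by
  obtain ⟨ux, hx⟩ := exists_isHarmonicExt_ind m E x
  obtain ⟨up, hp⟩ := exists_isHarmonicExt_ind m E p
  rw [hx.cond_eq hp, neg_ne_zero] at h
  rw [hp.Q_eq]
  refine (energy_nonneg m up).lt_of_ne fun h₀ => h ?_
  simpa [← h₀] using bilin_sq_le m ux up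

theorem IsHarmonicExt.Q_diff_singleton {v u up : ℝ × ℝ → ℝ} (hu : IsHarmonicExt m E v u)
    (hvp : v p = 0) (hp : p ∈ E) (hup : IsHarmonicExt m E (ind p) up) (hα : 0 < Energy m up) :
    Q m (E \ {p}) v = Energy m u - bilin m u up ^ 2 / Energy m up := by
  have hind_off (z : ℝ × ℝ) (hz : z ∈ E \ {p}) : up z = 0 := by
    rw [hup.1 z hz.1]; exact if_neg hz.2
  refine le_antisymm ?_ (le_Q fun u' hu' => ?_)
  · calc Q m (E \ {p}) v ≤ Energy m (u + (-bilin m u up / Energy m up) • up) :=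
          Q_le_energy fun z hz => by simp [hu.1 z hz.1, hind_off z hz]
      _ = Energy m u - bilin m u up ^ 2 / Energy m up := by
          rw [energy_add_smul]; field_simp; ring
  · -- on `E`, `u'` agrees with `v + u' p • 𝟙_p`, whose harmonic extension is `u + u' p • up`
    set t := u' p
    have hadm : ∀ z ∈ E, u' z = (v + t • ind p) z := fun z hz => by
      by_cases hzp : z = p
      · subst hzp; simp [ind, hvp, t]
      · simp [ind, hzp, hu' z ⟨hz, hzp⟩]
    calc Energy m u - bilin m u up ^ 2 / Energy m up
        ≤ Energy m u + 2 * t * bilin m u up + t ^ 2 * Energy m up := by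
          have h : -(2 * t * bilin m u up + t ^ 2 * Energy m up) ≤
              bilin m u up ^ 2 / Energy m up := by
            rw [le_div_iff₀ hα]
            nlinarith [sq_nonneg (Energy m up * t + bilin m u up)]
          linarith
      _ = Q m E (v + t • ind p) := by rw [(hu.add_smul hup t).Q_eq, energy_add_smul]
      _ ≤ Energy m u' := Q_le_energy hadm

theorem cond_diff_singleton (hp : p ∈ E) (hxp : x ≠ p) (hyp : y ≠ p) (hα : 0 < Q m E (ind p)) :
    cond m (E \ {p}) x y = cond m E x y + cond m E x p * cond m E y p / Q m E (ind p) := by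
  obtain ⟨ux, hx⟩ := exists_isHarmonicExt_ind m E x
  obtain ⟨uy, hy⟩ := exists_isHarmonicExt_ind m E y
  obtain ⟨up, hup⟩ := exists_isHarmonicExt_ind m E p
  rw [hup.Q_eq] at hα ⊢
  have hxp' : ind x p = 0 := if_neg hxp.symm
  have hyp' : ind y p = 0 := if_neg hyp.symm
  rw [cond, hx.Q_diff_singleton hxp' hp hup hα, hy.Q_diff_singleton hyp' hp hup hα,
    (hx.add hy).Q_diff_singleton (by simp [hxp', hyp']) hp hup hα,
    hx.cond_eq hy, hx.cond_eq hup, hy.cond_eq hup, energy_add, bilin_add_left]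
  field_simp
  ring

end Conductance

theorem stmt4_general (m : ℕ) (Γ : Set (ℝ × ℝ)) (pp : ℝ × ℝ) (hp : pp ∈ Γ)
    (x y : ℝ × ℝ) (hx : x ∈ Γ \ {pp}) (hy : y ∈ Γ \ {pp}) (hxy : x ≠ y)
    (hxp : 0 < cond m Γ x pp) (hyp : 0 < cond m Γ y pp) :
    0 < cond m (Γ \ {pp}) x y := by
  have hα := Q_ind_pos_of_cond_ne_zero hxp.ne'
  rw [cond_diff_singleton hp hx.2 hy.2 hα]
  exact add_pos_of_nonneg_of_pos (cond_nonneg hxy) (div_pos (mul_pos hxp hyp) hα)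

/-- Let `Γ ⊆ V_m`, `p ∈ Γ`, `Γ' = Γ \ {p}`. If `x, y ∈ Γ'` are distinct
with `c^Γ_{x,p} > 0` and `c^Γ_{y,p} > 0`, then `c^{Γ'}_{x,y} > 0`. -/
theorem stmt4 (m : ℕ) (Γ : Set (ℝ × ℝ)) (hΓ : Γ ⊆ V m) (pp : ℝ × ℝ) (hp : pp ∈ Γ)
    (x y : ℝ × ℝ) (hx : x ∈ Γ \ {pp}) (hy : y ∈ Γ \ {pp}) (hxy : x ≠ y)
    (hxp : 0 < cond m Γ x pp) (hyp : 0 < cond m Γ y pp) :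
    0 < cond m (Γ \ {pp}) x y :=
  stmt4_general m Γ pp hp x y hx hy hxy hxp hyp

end SGPaper
end
end

section
/- For every n ≥ 0, the conductances of E_n⁺ = {q₀, x₀, …, x_{2^n}} computed at level n satisfy c^n_{q₀,x₀} = c^n_{q₀,x_{2^n}} = a_n and c^n_{q₀,x_j} = 2a_n for all 0 < j < 2^n, where a_n = 7·5^n/(3^n + 6·10^n). -/
/-!
The minimizer for `Q(𝟙_{q₀})` is written down explicitly: `topHarmonic n` is harmonic off `E_n⁺`,
glued from the harmonic extension with corner values `(1, t, t)` on the top cell and two copies of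
`t • topHarmonic (n - 1)` on the bottom cells. A discrete Gauss–Green formula expresses its energy
pairing with any `v` through the values of `v` on `E_n⁺` alone, as
`topFlux n * v q₀ - bottomFlux n * ∑ₖ (v xₖ + v xₖ₊₁)`. So adding `topHarmonic n` shifts the energy
of all competitors with prescribed values on `E_n⁺` by one constant, whence
`Q(𝟙_{q₀} + v) = Q(v) + const(v)`, and the conductance to `x_j` is `(5/3)ⁿ * bottomFlux n` times the
number (one or two) of bottom edges at `x_j`.
-/

open scoped BigOperators

noncomputable section

namespace SGPaper

def xb (n j : ℕ) : ℝ × ℝ := q 1 + ((j : ℝ) / 2 ^ n) • (q 2 - q 1)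

def Ebot (n : ℕ) : Set (ℝ × ℝ) := {p | ∃ j ≤ 2 ^ n, p = xb n j}

def Eplus (n : ℕ) : Set (ℝ × ℝ) := insert (q 0) (Ebot n)

lemma sqrt_three_pos : 0 < √3 := by positivity

lemma q_injective : Function.Injective q := by
  have := sqrt_three_pos
  intro i j h
  fin_cases i <;> fin_cases j <;> simp_all [q]

def triangle : Set (ℝ × ℝ) := {p | 0 ≤ p.2 ∧ p.2 ≤ √3 * p.1 ∧ p.2 ≤ √3 * (1 - p.1)}

lemma fst_Fmap (i : Fin 3) (x : ℝ × ℝ) : (Fmap i x).1 = (x.1 + (q i).1) / 2 := by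
  simp only [Fmap, smul_add, Prod.fst_add, Prod.smul_fst, smul_eq_mul]; ring

lemma snd_Fmap (i : Fin 3) (x : ℝ × ℝ) : (Fmap i x).2 = (x.2 + (q i).2) / 2 := by
  simp only [Fmap, smul_add, Prod.snd_add, Prod.smul_snd, smul_eq_mul]; ring

lemma q_mem_triangle (i : Fin 3) : q i ∈ triangle := by
  have := sqrt_three_pos
  fin_cases i <;> refine ⟨?_, ?_, ?_⟩ <;> simp [q] <;> linarith

lemma Fmap_mem_triangle (i : Fin 3) {p : ℝ × ℝ} (hp : p ∈ triangle) : Fmap i p ∈ triangle := by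
  obtain ⟨h1, h2, h3⟩ := hp
  have := sqrt_three_pos
  refine ⟨?_, ?_, ?_⟩ <;> simp only [fst_Fmap, snd_Fmap] <;> fin_cases i <;> simp [q] <;>
    nlinarith [Real.mul_self_sqrt (show (0:ℝ) ≤ 3 by norm_num)]

lemma eq_of_Fmap_eq_Fmap {i j : Fin 3} (hij : i ≠ j) {u v : ℝ × ℝ} (hu : u ∈ triangle)
    (hv : v ∈ triangle) (h : Fmap i u = Fmap j v) : u = q j ∧ v = q i := by
  obtain ⟨u1, u2, u3⟩ := hu
  obtain ⟨v1, v2, v3⟩ := hv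
  have hf := congrArg Prod.fst h
  have hs := congrArg Prod.snd h
  rw [fst_Fmap, fst_Fmap] at hf
  rw [snd_Fmap, snd_Fmap] at hs
  obtain ⟨u₁, u₂⟩ := u
  obtain ⟨v₁, v₂⟩ := v
  fin_cases i <;> fin_cases j <;> simp_all [q, Prod.ext_iff] <;> (repeat' constructor) <;>
    nlinarith [sqrt_three_pos]

lemma Fmap_injective (i : Fin 3) : Function.Injective (Fmap i) := fun x y h =>
  add_right_cancel (smul_right_injective (ℝ × ℝ) (by norm_num : (2⁻¹ : ℝ) ≠ 0) h)

lemma two_smul_Fmap_sub (i : Fin 3) (x : ℝ × ℝ) : (2 : ℝ) • Fmap i x - q i = x := by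
  simp [Fmap, smul_smul]

lemma Fmap_q_self (i : Fin 3) : Fmap i (q i) = q i := by
  simp only [Fmap, ← two_smul ℝ (q i), smul_smul]; norm_num

lemma Fmap_q_comm (i j : Fin 3) : Fmap i (q j) = Fmap j (q i) := by
  simp [Fmap, add_comm]

lemma Fword_mem_triangle (w : List (Fin 3)) {p : ℝ × ℝ} (hp : p ∈ triangle) :
    Fword w p ∈ triangle := by
  induction w with
  | nil => exact hp
  | cons i w ih => exact Fmap_mem_triangle i ih

lemma V_subset_triangle (m : ℕ) : V m ⊆ triangle := by
  rintro _ ⟨w, -, i, rfl⟩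
  exact Fword_mem_triangle w (q_mem_triangle i)

def cellEdges : Finset (Sym2 (ℝ × ℝ)) := {s(q 0, q 1), s(q 0, q 2), s(q 1, q 2)}

def edgeFinset : ℕ → Finset (Sym2 (ℝ × ℝ))
  | 0 => cellEdges
  | n + 1 => Finset.univ.biUnion fun i : Fin 3 => (edgeFinset n).image (Sym2.map (Fmap i))

lemma isEdge_zero_iff {e : Sym2 (ℝ × ℝ)} : IsEdge 0 e ↔ e ∈ cellEdges := by
  constructor
  · rintro ⟨x, y, ⟨hxy, w, hw, ⟨i, rfl⟩, ⟨j, rfl⟩⟩, rfl⟩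
    obtain rfl := List.length_eq_zero_iff.mp hw
    have hij : i ≠ j := fun h => hxy (h ▸ rfl)
    fin_cases i <;> fin_cases j <;> simp_all [cellEdges, Fword, Sym2.eq_swap]
  · simp only [cellEdges, Finset.mem_insert, Finset.mem_singleton]
    rintro (rfl | rfl | rfl) <;>
      exact ⟨_, _, ⟨q_injective.ne (by decide), [], rfl, ⟨_, rfl⟩, ⟨_, rfl⟩⟩, rfl⟩

lemma isEdge_succ_iff {n : ℕ} {e : Sym2 (ℝ × ℝ)} :
    IsEdge (n + 1) e ↔ ∃ i, ∃ e', IsEdge n e' ∧ Sym2.map (Fmap i) e' = e := by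
  constructor
  · rintro ⟨x, y, ⟨hxy, w, hw, ⟨a, rfl⟩, ⟨b, rfl⟩⟩, rfl⟩
    obtain ⟨i, w, rfl⟩ := List.exists_cons_of_length_eq_add_one hw
    exact ⟨i, _, ⟨_, _, ⟨fun h => hxy (congrArg (Fmap i) h), w, by simpa using hw,
      ⟨a, rfl⟩, ⟨b, rfl⟩⟩, rfl⟩, rfl⟩
  · rintro ⟨i, _, ⟨x, y, ⟨hxy, w, hw, ⟨a, rfl⟩, ⟨b, rfl⟩⟩, rfl⟩, rfl⟩
    exact ⟨_, _, ⟨(Fmap_injective i).ne hxy, i :: w, by simp [hw], ⟨a, rfl⟩, ⟨b, rfl⟩⟩, rfl⟩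

lemma mem_edgeFinset_iff {n : ℕ} {e : Sym2 (ℝ × ℝ)} : e ∈ edgeFinset n ↔ IsEdge n e := by
  induction n generalizing e with
  | zero => exact isEdge_zero_iff.symm
  | succ n ih => simp [edgeFinset, isEdge_succ_iff, ih]

lemma IsEdge.exists_eq {n : ℕ} {e : Sym2 (ℝ × ℝ)} (he : IsEdge n e) :
    ∃ x y, x ≠ y ∧ x ∈ V n ∧ y ∈ V n ∧ e = s(x, y) := by
  obtain ⟨x, y, ⟨hxy, w, hw, ⟨a, rfl⟩, ⟨b, rfl⟩⟩, rfl⟩ := he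
  exact ⟨_, _, hxy, ⟨w, hw, a, rfl⟩, ⟨w, hw, b, rfl⟩, rfl⟩

lemma disjoint_image_edgeFinset {n : ℕ} {i j : Fin 3} (hij : i ≠ j) :
    Disjoint ((edgeFinset n).image (Sym2.map (Fmap i)))
      ((edgeFinset n).image (Sym2.map (Fmap j))) := by
  simp only [Finset.disjoint_left, Finset.mem_image, not_exists, not_and]
  rintro _ ⟨e, he, rfl⟩ e' he' heq
  obtain ⟨x, y, hxy, hx, hy, rfl⟩ := (mem_edgeFinset_iff.mp he).exists_eq
  obtain ⟨x', y', -, hx', hy', rfl⟩ := (mem_edgeFinset_iff.mp he').exists_eq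
  have hT := V_subset_triangle n
  rw [Sym2.map_mk, Sym2.map_mk, Sym2.eq_iff] at heq
  rcases heq with ⟨h1, h2⟩ | ⟨h1, h2⟩
  · exact hxy ((eq_of_Fmap_eq_Fmap hij.symm (hT hx') (hT hx) h1).2.trans
      (eq_of_Fmap_eq_Fmap hij.symm (hT hy') (hT hy) h2).2.symm)
  · exact hxy ((eq_of_Fmap_eq_Fmap hij.symm (hT hy') (hT hx) h2).2.trans
      (eq_of_Fmap_eq_Fmap hij.symm (hT hx') (hT hy) h1).2.symm)

lemma sum_edgeFinset_succ (n : ℕ) (f : Sym2 (ℝ × ℝ) → ℝ) :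
    ∑ e ∈ edgeFinset (n + 1), f e = ∑ i, ∑ e ∈ edgeFinset n, f (Sym2.map (Fmap i) e) := by
  rw [edgeFinset, Finset.sum_biUnion fun i _ j _ hij => disjoint_image_edgeFinset hij]
  exact Finset.sum_congr rfl fun i _ =>
    Finset.sum_image fun _ _ _ _ h => Sym2.map.injective (Fmap_injective i) h

def edgeProd (u v : ℝ × ℝ → ℝ) : Sym2 (ℝ × ℝ) → ℝ :=
  Sym2.lift ⟨fun x y => (u x - u y) * (v x - v y), fun _ _ => by ring⟩

@[simp]
lemma edgeProd_mk (u v : ℝ × ℝ → ℝ) (x y : ℝ × ℝ) :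
    edgeProd u v s(x, y) = (u x - u y) * (v x - v y) := rfl

lemma edgeProd_map (u v : ℝ × ℝ → ℝ) (F : ℝ × ℝ → ℝ × ℝ) (e : Sym2 (ℝ × ℝ)) :
    edgeProd u v (Sym2.map F e) = edgeProd (u ∘ F) (v ∘ F) e := by
  induction e using Sym2.ind with
  | _ x y => rfl

def energyForm (n : ℕ) (u v : ℝ × ℝ → ℝ) : ℝ := ∑ e ∈ edgeFinset n, edgeProd u v e

lemma Energy_eq_energyForm (n : ℕ) (u : ℝ × ℝ → ℝ) :
    Energy n u = (5 / 3 : ℝ) ^ n * energyForm n u u := by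
  have hedge : IsEdge n = (· ∈ edgeFinset n) := funext fun _ => propext mem_edgeFinset_iff.symm
  rw [Energy, hedge, Finset.tsum_subtype, energyForm]
  congr 1
  refine Finset.sum_congr rfl fun e _ => ?_
  induction e using Sym2.ind with
  | _ x y => exact sq _

lemma Energy_nonneg (n : ℕ) (u : ℝ × ℝ → ℝ) : 0 ≤ Energy n u := by
  rw [Energy_eq_energyForm]
  refine mul_nonneg (by positivity) (Finset.sum_nonneg fun e _ => ?_)
  induction e using Sym2.ind with
  | _ x y => exact mul_self_nonneg _

lemma Energy_add (n : ℕ) (u g : ℝ × ℝ → ℝ) :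
    Energy n (u + g) = Energy n u + 2 * (5 / 3 : ℝ) ^ n * energyForm n u g + Energy n g := by
  simp only [Energy_eq_energyForm, energyForm, Finset.mul_sum, ← Finset.sum_add_distrib]
  refine Finset.sum_congr rfl fun e _ => ?_
  induction e using Sym2.ind with
  | _ x y => simp only [edgeProd_mk, Pi.add_apply]; ring

lemma energyForm_congr_left {n : ℕ} {u u' : ℝ × ℝ → ℝ} (h : Set.EqOn u u' (V n))
    (v : ℝ × ℝ → ℝ) : energyForm n u v = energyForm n u' v := by
  refine Finset.sum_congr rfl fun e he => ?_
  obtain ⟨x, y, -, hx, hy, rfl⟩ := (mem_edgeFinset_iff.mp he).exists_eq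
  simp [h hx, h hy]

lemma energyForm_smul_left (n : ℕ) (t : ℝ) (u v : ℝ × ℝ → ℝ) :
    energyForm n (t • u) v = t * energyForm n u v := by
  rw [energyForm, energyForm, Finset.mul_sum]
  refine Finset.sum_congr rfl fun e _ => ?_
  induction e using Sym2.ind with
  | _ x y => simp only [edgeProd_mk, Pi.smul_apply, smul_eq_mul]; ring

lemma Energy_zero (n : ℕ) : Energy n 0 = 0 := by
  rw [Energy_eq_energyForm, ← zero_smul ℝ (0 : ℝ × ℝ → ℝ), energyForm_smul_left, zero_mul, mul_zero]

lemma energyForm_zero (u v : ℝ × ℝ → ℝ) :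
    energyForm 0 u v = (u (q 0) - u (q 1)) * (v (q 0) - v (q 1))
      + (u (q 0) - u (q 2)) * (v (q 0) - v (q 2)) + (u (q 1) - u (q 2)) * (v (q 1) - v (q 2)) := by
  have hq : ∀ i j : Fin 3, q i = q j ↔ i = j := fun _ _ => q_injective.eq_iff
  rw [energyForm, edgeFinset, cellEdges, Finset.sum_insert (by simp [hq]),
    Finset.sum_insert (by simp [hq]), Finset.sum_singleton, edgeProd_mk, edgeProd_mk, edgeProd_mk,
    add_assoc]

lemma energyForm_succ (n : ℕ) (u v : ℝ × ℝ → ℝ) :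
    energyForm (n + 1) u v = ∑ i, energyForm n (u ∘ Fmap i) (v ∘ Fmap i) := by
  simp only [energyForm, sum_edgeFinset_succ, edgeProd_map]

open Classical in
def glue (f : Fin 3 → ℝ × ℝ → ℝ) (p : ℝ × ℝ) : ℝ :=
  if h : ∃ k, p ∈ Fmap k '' triangle then f h.choose ((2 : ℝ) • p - q h.choose) else 0

lemma glue_Fmap {f : Fin 3 → ℝ × ℝ → ℝ} (hf : ∀ i j, f i (q j) = f j (q i)) (i : Fin 3)
    {p : ℝ × ℝ} (hp : p ∈ triangle) : glue f (Fmap i p) = f i p := by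
  have h : ∃ k, Fmap i p ∈ Fmap k '' triangle := ⟨i, p, hp, rfl⟩
  rw [glue, dif_pos h]
  obtain ⟨u, hu, hk⟩ := h.choose_spec
  generalize h.choose = k at hk ⊢
  rw [← hk, two_smul_Fmap_sub]
  rcases eq_or_ne k i with rfl | hki
  · rw [Fmap_injective k hk]
  · obtain ⟨rfl, rfl⟩ := eq_of_Fmap_eq_Fmap hki hu hp hk
    exact hf k i

lemma energyForm_glue {f : Fin 3 → ℝ × ℝ → ℝ} (hf : ∀ i j, f i (q j) = f j (q i)) (n : ℕ)
    (v : ℝ × ℝ → ℝ) :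
    energyForm (n + 1) (glue f) v = ∑ i, energyForm n (f i) (v ∘ Fmap i) := by
  rw [energyForm_succ]
  exact Finset.sum_congr rfl fun i _ =>
    energyForm_congr_left (fun p hp => glue_Fmap hf i (V_subset_triangle n hp)) _

/-- The `2/5–2/5–1/5` rule: corner values on the cell `F_i(T)` of the harmonic extension of the
corner values `x`. -/
def cellData (x : Fin 3 → ℝ) (i j : Fin 3) : ℝ :=
  if j = i then x i else (x i + x j + ∑ k, x k) / 5

lemma cellData_comm (x : Fin 3 → ℝ) (i j : Fin 3) : cellData x i j = cellData x j i := by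
  rcases eq_or_ne j i with rfl | h
  · rfl
  · rw [cellData, cellData, if_neg h, if_neg h.symm]
    ring

def harmonicExt : ℕ → (Fin 3 → ℝ) → ℝ × ℝ → ℝ
  | 0, x => fun p => ∑ i, x i * ind (q i) p
  | n + 1, x => glue fun i => harmonicExt n (cellData x i)

lemma harmonicExt_q (n : ℕ) (x : Fin 3 → ℝ) (i : Fin 3) : harmonicExt n x (q i) = x i := by
  induction n generalizing x i with
  | zero => simp [harmonicExt, ind, q_injective.eq_iff]
  | succ n ih =>
    rw [← Fmap_q_self i, harmonicExt, glue_Fmap (fun i j => by rw [ih, ih, cellData_comm]) i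
      (q_mem_triangle i), ih, cellData, if_pos rfl]

/-- Gauss–Green formula; `3 x_i - ∑ x` are the normal derivatives at the corners. -/
lemma energyForm_harmonicExt (n : ℕ) (x : Fin 3 → ℝ) (v : ℝ × ℝ → ℝ) :
    energyForm n (harmonicExt n x) v = (3 / 5 : ℝ) ^ n * ∑ i, (3 * x i - ∑ k, x k) * v (q i) := by
  induction n generalizing x v with
  | zero =>
    simp only [energyForm_zero, harmonicExt_q, Fin.sum_univ_three]
    ring
  | succ n ih =>
    rw [harmonicExt, energyForm_glue (fun i j => by rw [harmonicExt_q, harmonicExt_q, cellData_comm])]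
    simp only [ih, Function.comp_apply, Fin.sum_univ_three, cellData, Fmap_q_self,
      Fmap_q_comm 1 0, Fmap_q_comm 2 0, Fmap_q_comm 2 1, ↓reduceIte, one_ne_zero, Fin.reduceEq,
      zero_ne_one]
    ring

lemma xb_eq (n j : ℕ) : xb n j = ((j : ℝ) / 2 ^ n, 0) := by
  simp [xb, q]

lemma xb_zero (n : ℕ) : xb n 0 = q 1 := by simp [xb_eq, q]

lemma xb_two_pow (n : ℕ) : xb n (2 ^ n) = q 2 := by simp [xb_eq, q]

lemma xb_injective (n : ℕ) : Function.Injective (xb n) := by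
  intro i j h
  simpa [xb_eq] using h

lemma xb_ne_q_zero (n j : ℕ) : xb n j ≠ q 0 := by
  simp only [xb_eq, q, ne_eq, Prod.ext_iff, not_and]
  exact fun _ => (by positivity : (0 : ℝ) < √3 / 2).ne

lemma xb_mem_triangle {n j : ℕ} (hj : j ≤ 2 ^ n) : xb n j ∈ triangle := by
  have h₀ : (0 : ℝ) ≤ j / 2 ^ n := by positivity
  have h₁ : (j : ℝ) / 2 ^ n ≤ 1 := div_le_one_of_le₀ (by exact_mod_cast hj) (by positivity)
  rw [xb_eq]
  refine ⟨le_rfl, ?_, ?_⟩ <;> simp only <;> nlinarith [sqrt_three_pos]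

lemma Fmap_one_xb (n j : ℕ) : Fmap 1 (xb n j) = xb (n + 1) j := by
  simp only [xb_eq, Prod.ext_iff, fst_Fmap, snd_Fmap, q, pow_succ]
  constructor <;> ring

lemma Fmap_two_xb (n j : ℕ) : Fmap 2 (xb n j) = xb (n + 1) (2 ^ n + j) := by
  simp only [xb_eq, Prod.ext_iff, fst_Fmap, snd_Fmap, q, pow_succ]
  constructor
  · push_cast
    field_simp
    ring
  · ring

def bottomSum (n : ℕ) (v : ℝ × ℝ → ℝ) : ℝ :=
  ∑ k ∈ Finset.range (2 ^ n), (v (xb n k) + v (xb n (k + 1)))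

lemma bottomSum_zero (v : ℝ × ℝ → ℝ) : bottomSum 0 v = v (q 1) + v (q 2) := by
  simp [bottomSum, xb_zero, ← xb_two_pow 0]

lemma bottomSum_succ (n : ℕ) (v : ℝ × ℝ → ℝ) :
    bottomSum (n + 1) v = bottomSum n (v ∘ Fmap 1) + bottomSum n (v ∘ Fmap 2) := by
  simp only [bottomSum, pow_succ, mul_two, Finset.sum_range_add, Function.comp_apply, Fmap_one_xb,
    Fmap_two_xb, add_assoc]

lemma bottomSum_ind {n j : ℕ} (hj : j ≤ 2 ^ n) :
    bottomSum n (ind (xb n j)) = (if j < 2 ^ n then 1 else 0) + (if 0 < j then 1 else 0) := by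
  simp only [bottomSum, ind, (xb_injective n).eq_iff, Finset.sum_add_distrib,
    Finset.sum_ite_eq', Finset.mem_range]
  congr 1
  rcases j with _ | j
  · simp
  · simp only [add_left_inj, Finset.sum_ite_eq', Finset.mem_range]
    simp only [Nat.succ_le_iff] at hj
    simp [hj]

def fluxDen (n : ℕ) : ℝ := 3 ^ n + 6 * 10 ^ n

def bottomFlux (n : ℕ) : ℝ := 7 * 3 ^ n / fluxDen n

def topFlux (n : ℕ) : ℝ := 14 * 6 ^ n / fluxDen n

def cellRatio (n : ℕ) : ℝ := 3 * fluxDen n / fluxDen (n + 1)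

lemma fluxDen_pos (n : ℕ) : 0 < fluxDen n := by unfold fluxDen; positivity

lemma six_pow_eq (n : ℕ) : (6 : ℝ) ^ n = 2 ^ n * 3 ^ n := by rw [← mul_pow]; norm_num

lemma ten_pow_eq (n : ℕ) : (10 : ℝ) ^ n = 2 ^ n * 5 ^ n := by rw [← mul_pow]; norm_num

lemma bottomFlux_succ (n : ℕ) : bottomFlux (n + 1) = cellRatio n * bottomFlux n := by
  have := (fluxDen_pos n).ne'
  simp only [bottomFlux, cellRatio]
  field_simp
  ring

lemma topFlux_succ (n : ℕ) : topFlux (n + 1) = (3 / 5 : ℝ) ^ n * (2 - 2 * cellRatio n) := by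
  simp only [topFlux, cellRatio, fluxDen, div_pow, pow_succ, six_pow_eq, ten_pow_eq]
  field_simp
  ring

/-- `cellRatio n` is chosen so that `topHarmonic (n + 1)` is harmonic at the junctions
`F₀(q₁)`, `F₀(q₂)` of its top cell. -/
lemma cellRatio_balance (n : ℕ) :
    (3 / 5 : ℝ) ^ n * (cellRatio n - 1) + cellRatio n * topFlux n = 0 := by
  simp only [topFlux, cellRatio, fluxDen, div_pow, pow_succ, six_pow_eq, ten_pow_eq]
  field_simp
  ring

def topCells (n : ℕ) (h : ℝ × ℝ → ℝ) : Fin 3 → ℝ × ℝ → ℝ :=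
  ![harmonicExt n ![1, cellRatio n, cellRatio n], cellRatio n • h, cellRatio n • h]

lemma topCells_junction (n : ℕ) {h : ℝ × ℝ → ℝ} (hq : ∀ i, h (q i) = ![1, 0, 0] i) (i j : Fin 3) :
    topCells n h i (q j) = topCells n h j (q i) := by
  fin_cases i <;> fin_cases j <;> simp [topCells, harmonicExt_q, hq]

def topHarmonic : ℕ → ℝ × ℝ → ℝ
  | 0 => harmonicExt 0 ![1, 0, 0]
  | n + 1 => glue (topCells n (topHarmonic n))

lemma topHarmonic_q (n : ℕ) (i : Fin 3) : topHarmonic n (q i) = ![1, 0, 0] i := by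
  induction n generalizing i with
  | zero => exact harmonicExt_q 0 _ i
  | succ n ih =>
    rw [← Fmap_q_self i, topHarmonic, glue_Fmap (topCells_junction n ih) i (q_mem_triangle i)]
    fin_cases i <;> simp [topCells, harmonicExt_q, ih]

lemma topHarmonic_succ_Fmap (n : ℕ) (i : Fin 3) {p : ℝ × ℝ} (hp : p ∈ triangle) :
    topHarmonic (n + 1) (Fmap i p) = topCells n (topHarmonic n) i p :=
  glue_Fmap (topCells_junction n (topHarmonic_q n)) i hp

lemma topHarmonic_xb (n : ℕ) {j : ℕ} (hj : j ≤ 2 ^ n) : topHarmonic n (xb n j) = 0 := by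
  induction n generalizing j with
  | zero =>
    interval_cases j
    · simpa [xb_zero] using topHarmonic_q 0 1
    · simpa [← xb_two_pow 0] using topHarmonic_q 0 2
  | succ n ih =>
    rcases le_or_gt j (2 ^ n) with hj' | hj'
    · rw [← Fmap_one_xb, topHarmonic_succ_Fmap n 1 (xb_mem_triangle hj')]
      simp [topCells, ih hj']
    · obtain ⟨k, rfl⟩ := Nat.exists_eq_add_of_lt hj'
      have hk : k + 1 ≤ 2 ^ n := by rw [pow_succ] at hj; omega
      rw [add_assoc, ← Fmap_two_xb, topHarmonic_succ_Fmap n 2 (xb_mem_triangle hk)]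
      simp [topCells, ih hk]

lemma energyForm_topHarmonic (n : ℕ) (v : ℝ × ℝ → ℝ) :
    energyForm n (topHarmonic n) v = topFlux n * v (q 0) - bottomFlux n * bottomSum n v := by
  induction n generalizing v with
  | zero =>
    simp only [topHarmonic, energyForm_zero, harmonicExt_q, Matrix.cons_val, topFlux, bottomFlux,
      fluxDen, bottomSum_zero]
    ring
  | succ n ih =>
    rw [topHarmonic, energyForm_glue (topCells_junction n (topHarmonic_q n))]
    simp only [topCells, Fin.sum_univ_three, Matrix.cons_val, energyForm_smul_left,
      energyForm_harmonicExt, ih, bottomSum_succ, Function.comp_apply, Fmap_q_self,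
      Fmap_q_comm 1 0, Fmap_q_comm 2 0, topFlux_succ, bottomFlux_succ]
    linear_combination (v (Fmap 0 (q 1)) + v (Fmap 0 (q 2))) * cellRatio_balance n

lemma Q_zero (m : ℕ) (E : Set (ℝ × ℝ)) : Q m E 0 = 0 :=
  le_antisymm (csInf_le ⟨0, by rintro _ ⟨u, -, rfl⟩; exact Energy_nonneg m u⟩
      ⟨0, fun _ _ => rfl, (Energy_zero m).symm⟩)
    (le_csInf ⟨_, 0, fun _ _ => rfl, rfl⟩ (by rintro _ ⟨u, -, rfl⟩; exact Energy_nonneg m u))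

lemma Q_add_of_energy_add {m : ℕ} {E : Set (ℝ × ℝ)} {h w v : ℝ × ℝ → ℝ} (C : ℝ) (hh : Set.EqOn h w E)
    (hC : ∀ g, Set.EqOn g v E → Energy m (h + g) = Energy m g + C) :
    Q m E (w + v) = Q m E v + C := by
  set S := {r | ∃ u, (∀ x ∈ E, u x = v x) ∧ r = Energy m u}
  have hset : {r | ∃ u, (∀ x ∈ E, u x = (w + v) x) ∧ r = Energy m u} = OrderIso.addRight C '' S := by
    ext r
    constructor
    · rintro ⟨u, hu, rfl⟩
      have hg : Set.EqOn (u - h) v E := fun x hx => by simp [hu x hx, hh hx]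
      refine ⟨_, ⟨u - h, hg, rfl⟩, ?_⟩
      simpa using (hC _ hg).symm
    · rintro ⟨_, ⟨g, hg, rfl⟩, rfl⟩
      exact ⟨h + g, fun x hx => by simp [hh hx, hg x hx], (hC g hg).symm⟩
  have hS : S.Nonempty := ⟨_, v, fun _ _ => rfl, rfl⟩
  have hS' : BddBelow S := ⟨0, by rintro _ ⟨u, -, rfl⟩; exact Energy_nonneg m u⟩
  rw [Q, hset, ← OrderIso.map_csInf' _ hS hS']
  rfl

lemma topHarmonic_eqOn_Eplus (n : ℕ) : Set.EqOn (topHarmonic n) (ind (q 0)) (Eplus n) := by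
  rintro _ (rfl | ⟨j, hj, rfl⟩)
  · simpa [ind] using topHarmonic_q n 0
  · simp [ind, topHarmonic_xb n hj, xb_ne_q_zero]

lemma bottomSum_congr {n : ℕ} {g v : ℝ × ℝ → ℝ} (h : Set.EqOn g v (Ebot n)) :
    bottomSum n g = bottomSum n v :=
  Finset.sum_congr rfl fun k hk => by
    have hk : k < 2 ^ n := Finset.mem_range.mp hk
    rw [h ⟨k, hk.le, rfl⟩, h ⟨k + 1, hk, rfl⟩]

lemma Q_Eplus_ind_add (n : ℕ) (v : ℝ × ℝ → ℝ) :
    Q n (Eplus n) (ind (q 0) + v) = Q n (Eplus n) v + (Energy n (topHarmonic n)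
      + 2 * (5 / 3 : ℝ) ^ n * (topFlux n * v (q 0) - bottomFlux n * bottomSum n v)) := by
  refine Q_add_of_energy_add _ (topHarmonic_eqOn_Eplus n) fun g hg => ?_
  rw [Energy_add, energyForm_topHarmonic, hg (Set.mem_insert _ _),
    bottomSum_congr (hg.mono (Set.subset_insert _ _))]
  ring

lemma cond_Eplus (n j : ℕ) :
    cond n (Eplus n) (q 0) (xb n j) = (5 / 3 : ℝ) ^ n * bottomFlux n * bottomSum n (ind (xb n j)) := by
  have h₀ := Q_Eplus_ind_add n 0
  have h₁ := Q_Eplus_ind_add n (ind (xb n j))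
  rw [add_zero] at h₀
  simp only [cond, h₀, h₁, Q_zero, ind, (xb_ne_q_zero n j).symm, if_false]
  simp only [Pi.zero_apply, bottomSum, add_zero, Finset.sum_const_zero]
  ring

lemma five_thirds_pow_mul_bottomFlux (n : ℕ) :
    (5 / 3 : ℝ) ^ n * bottomFlux n = 7 * 5 ^ n / (3 ^ n + 6 * 10 ^ n) := by
  simp only [bottomFlux, fluxDen, div_pow]
  field_simp

/-- Conductances of `E_n⁺ = {q₀, x₀, …, x_{2ⁿ}}` at level `n` between
the top point and the bottom row, with `a_n = 7·5ⁿ/(3ⁿ + 6·10ⁿ)`. -/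
theorem stmt10 (n : ℕ) :
    cond n (Eplus n) (q 0) (xb n 0) = 7 * 5 ^ n / (3 ^ n + 6 * 10 ^ n) ∧
    cond n (Eplus n) (q 0) (xb n (2 ^ n)) = 7 * 5 ^ n / (3 ^ n + 6 * 10 ^ n) ∧
    ∀ j : ℕ, 0 < j → j < 2 ^ n →
      cond n (Eplus n) (q 0) (xb n j) = 2 * (7 * 5 ^ n / (3 ^ n + 6 * 10 ^ n)) := by
  have h2n : 0 < 2 ^ n := Nat.two_pow_pos n
  simp only [cond_Eplus, five_thirds_pow_mul_bottomFlux]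
  refine ⟨?_, ?_, fun j hj₀ hj => ?_⟩
  · rw [bottomSum_ind (Nat.zero_le _), if_pos h2n, if_neg (lt_irrefl 0)]
    ring
  · rw [bottomSum_ind le_rfl, if_neg (lt_irrefl _), if_pos h2n]
    ring
  · rw [bottomSum_ind hj.le, if_pos hj, if_pos hj₀]
    ring

end SGPaper
end
end
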